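/- Let d₀, d₁ : ℝ^m → ℝ be convex and define Ψ(θ,y) = inf{(1−y)d₀(θ⁰) + y d₁(θ¹) : (1−y)θ⁰ + yθ¹ = θ} for y ∈ (0,1). If (θ̂⁰, θ̂¹) attains the infimum at (θ,y), v ∈ ∂d₀(θ̂⁰) ∩ ∂d₁(θ̂¹), and w = ⟨v, θ̂⁰⟩ − ⟨v, θ̂¹⟩ + d₁(θ̂¹) − d₀(θ̂⁰), then (v, w) is a subgradient of Ψ at (θ, y): for all (θ', y') in the domain with y' ∈ (0,1), Ψ(θ', y') ≥ Ψ(θ, y) + ⟨v, θ' − θ⟩ + w(y' − y). -/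

import Mathlib

open Set

/-- The subdifferential of `f : ℝ^m → ℝ` at `x` (over the whole space). -/
def subdiff {m : ℕ} (f : EuclideanSpace ℝ (Fin m) → ℝ)
    (x : EuclideanSpace ℝ (Fin m)) : Set (EuclideanSpace ℝ (Fin m)) :=
  {v | ∀ z, f x + (inner ℝ v (z - x) : ℝ) ≤ f z}

/-- The weighted infimal convolution `Ψ(θ, y)`. -/
noncomputable def Psi {m : ℕ} (d₀ d₁ : EuclideanSpace ℝ (Fin m) → ℝ)
    (θ : EuclideanSpace ℝ (Fin m)) (y : ℝ) : ℝ :=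
  sInf {v : ℝ | ∃ θ0 θ1 : EuclideanSpace ℝ (Fin m),
    (1 - y) • θ0 + y • θ1 = θ ∧ v = (1 - y) * d₀ θ0 + y * d₁ θ1}

/-!
Both subgradient inequalities `dᵢ(tᵢ) ≥ dᵢ(θ̂ⁱ) + ⟨v, tᵢ − θ̂ⁱ⟩`, weighted by `1 − y'` and `y'`
and summed, show that every competitor in the infimum defining `Ψ(θ', y')` is at least the
affine function `⟨v, θ'⟩ + (1 − y')(d₀(θ̂⁰) − ⟨v, θ̂⁰⟩) + y'(d₁(θ̂¹) − ⟨v, θ̂¹⟩)`. Since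
`(θ̂⁰, θ̂¹)` attains `Ψ(θ, y)`, this affine function equals `Ψ` at `(θ, y)`, and it is exactly
the right-hand side of the subgradient inequality for `(v, w)`.
-/

theorem real_inner_one_sub_smul_add_smul_right {E : Type*} [NormedAddCommGroup E]
    [InnerProductSpace ℝ E] (v a b : E) (y : ℝ) :
    inner ℝ v ((1 - y) • a + y • b) = (1 - y) * inner ℝ v a + y * inner ℝ v b := by
  rw [inner_add_right, real_inner_smul_right, real_inner_smul_right]

namespace Psi

variable {m : ℕ} {d₀ d₁ : EuclideanSpace ℝ (Fin m) → ℝ}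

theorem le_of_forall_le {θ : EuclideanSpace ℝ (Fin m)} {y c : ℝ}
    (h : ∀ t0 t1, (1 - y) • t0 + y • t1 = θ → c ≤ (1 - y) * d₀ t0 + y * d₁ t1) :
    c ≤ Psi d₀ d₁ θ y := by
  refine le_csInf ⟨_, θ, θ, by module, rfl⟩ ?_
  rintro _ ⟨t0, t1, ht, rfl⟩
  exact h t0 t1 ht

theorem affine_le_of_mem_subdiff {v θ0 θ1 : EuclideanSpace ℝ (Fin m)}
    (hv₀ : v ∈ subdiff d₀ θ0) (hv₁ : v ∈ subdiff d₁ θ1)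
    (θ : EuclideanSpace ℝ (Fin m)) {y : ℝ} (hy : y ∈ Icc (0 : ℝ) 1) :
    inner ℝ v θ + (1 - y) * (d₀ θ0 - inner ℝ v θ0) + y * (d₁ θ1 - inner ℝ v θ1)
      ≤ Psi d₀ d₁ θ y := by
  refine le_of_forall_le fun t0 t1 ht => ?_
  have h₀ := mul_le_mul_of_nonneg_left (hv₀ t0) (sub_nonneg.2 hy.2)
  have h₁ := mul_le_mul_of_nonneg_left (hv₁ t1) hy.1
  rw [inner_sub_right] at h₀ h₁
  rw [← ht, real_inner_one_sub_smul_add_smul_right]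
  linarith

end Psi

theorem subgradient_of_Psi_general
    (m : ℕ) (d₀ d₁ : EuclideanSpace ℝ (Fin m) → ℝ)
    (θ : EuclideanSpace ℝ (Fin m)) (y : ℝ)
    (θ0 θ1 : EuclideanSpace ℝ (Fin m))
    (hconstr : (1 - y) • θ0 + y • θ1 = θ)
    (hattain : Psi d₀ d₁ θ y = (1 - y) * d₀ θ0 + y * d₁ θ1)
    (v : EuclideanSpace ℝ (Fin m)) (hv : v ∈ subdiff d₀ θ0 ∩ subdiff d₁ θ1)
    (w : ℝ)
    (hw : w = (inner ℝ v θ0 : ℝ) - (inner ℝ v θ1 : ℝ) + d₁ θ1 - d₀ θ0) :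
    ∀ θ' : EuclideanSpace ℝ (Fin m), ∀ y' ∈ Ioo (0:ℝ) 1,
      Psi d₀ d₁ θ y + (inner ℝ v (θ' - θ) : ℝ) + w * (y' - y) ≤ Psi d₀ d₁ θ' y' := by
  intro θ' y' hy'
  have hθ : inner ℝ v θ = (1 - y) * inner ℝ v θ0 + y * inner ℝ v θ1 := by
    rw [← hconstr, real_inner_one_sub_smul_add_smul_right]
  have hminorant := Psi.affine_le_of_mem_subdiff hv.1 hv.2 θ' (Ioo_subset_Icc_self hy')
  rw [hattain, hw, inner_sub_right]
  linear_combination hminorant - hθ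

/-- `(v, w)` with `w = ⟨v,θ̂⁰⟩ − ⟨v,θ̂¹⟩ + d₁(θ̂¹) − d₀(θ̂⁰)` is a
subgradient of `Ψ` at `(θ, y)`. -/
theorem subgradient_of_Psi
    (m : ℕ) (d₀ d₁ : EuclideanSpace ℝ (Fin m) → ℝ)
    (hd₀ : ConvexOn ℝ univ d₀) (hd₁ : ConvexOn ℝ univ d₁)
    (θ : EuclideanSpace ℝ (Fin m)) (y : ℝ) (hy : y ∈ Ioo (0:ℝ) 1)
    (θ0 θ1 : EuclideanSpace ℝ (Fin m))
    (hconstr : (1 - y) • θ0 + y • θ1 = θ)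
    (hattain : Psi d₀ d₁ θ y = (1 - y) * d₀ θ0 + y * d₁ θ1)
    (hmin : ∀ t0 t1 : EuclideanSpace ℝ (Fin m), (1 - y) • t0 + y • t1 = θ →
      (1 - y) * d₀ θ0 + y * d₁ θ1 ≤ (1 - y) * d₀ t0 + y * d₁ t1)
    (v : EuclideanSpace ℝ (Fin m)) (hv : v ∈ subdiff d₀ θ0 ∩ subdiff d₁ θ1)
    (w : ℝ)
    (hw : w = (inner ℝ v θ0 : ℝ) - (inner ℝ v θ1 : ℝ) + d₁ θ1 - d₀ θ0) :
    ∀ θ' : EuclideanSpace ℝ (Fin m), ∀ y' ∈ Ioo (0:ℝ) 1,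
      Psi d₀ d₁ θ y + (inner ℝ v (θ' - θ) : ℝ) + w * (y' - y) ≤ Psi d₀ d₁ θ' y' :=
  subgradient_of_Psi_general m d₀ d₁ θ y θ0 θ1 hconstr hattain v hv w hw
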